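/- Let n be a positive integer and let b, d be real numbers with b < 1 - n and d < b + 1 - n, and assume d is not a nonpositive integer. Then the polynomial ₂F₁(-n, b; d; z) has exactly n zeros, all of which are real and simple and lie in the open interval (1, ∞). -/

import Mathlib

/-! The contiguous relations of `₂F₁` give the Rodrigues-type identity
`(z^d (z-1)^(b-d-n) F(-n, b+1; d+1; z))' = -d z^(d-1) (z-1)^(b-d-n-1) F(-n-1, b; d; z)`.
For `b < -n` and `d < b - n` the function being differentiated tends to `0` at `1⁺` and at `∞`,
so by Rolle's theorem its `n` zeros in `(1, ∞)`, obtained by induction on `n`, interlace with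
`n + 1` distinct zeros of `F(-n-1, b; d)` there. A polynomial of degree at most `n + 1` with `n + 1` distinct roots
has exactly these as its complex roots, each simple. -/

/-- The Pochhammer symbol `(x)_k = x (x+1) ⋯ (x+k-1)` for a real number `x`. -/
noncomputable def poch (x : ℝ) (k : ℕ) : ℝ := ∏ i ∈ Finset.range k, (x + i)

/-- The terminating Gauss hypergeometric polynomial `₂F₁(-n, b; d; z)`
    as a real polynomial in `z`. -/
noncomputable def hypPoly (n : ℕ) (b d : ℝ) : Polynomial ℝ :=
  ∑ k ∈ Finset.range (n + 1),
    Polynomial.C ((poch (-(n : ℝ)) k * poch b k) / (poch d k * (Nat.factorial k))) *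
      Polynomial.X ^ k

open Polynomial Filter Set Topology

lemma poch_succ_right (x : ℝ) (k : ℕ) : poch x (k + 1) = poch x k * (x + k) :=
  Finset.prod_range_succ _ _

lemma poch_succ_left (x : ℝ) (k : ℕ) : poch x (k + 1) = x * poch (x + 1) k := by
  simp only [poch, Finset.prod_range_succ', Nat.cast_succ, Nat.cast_zero, add_zero, add_assoc,
    add_comm (1 : ℝ)]
  ring

lemma poch_ne_zero {x : ℝ} {k : ℕ} (h : ∀ i : ℕ, x ≠ -i) : poch x k ≠ 0 :=
  Finset.prod_ne_zero_iff.2 fun i _ hi => h i (eq_neg_of_add_eq_zero_left hi)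

lemma poch_neg_natCast_of_lt {n m : ℕ} (h : n < m) : poch (-n) m = 0 :=
  Finset.prod_eq_zero (Finset.mem_range.2 h) (neg_add_cancel _)

lemma coeff_hypPoly (n : ℕ) (b d : ℝ) (m : ℕ) :
    (hypPoly n b d).coeff m = poch (-n) m * poch b m / (poch d m * m.factorial) := by
  simp only [hypPoly, finsetSum_coeff, coeff_C_mul_X_pow]
  rw [Finset.sum_ite_eq]
  split_ifs with hm
  · rfl
  · rw [poch_neg_natCast_of_lt (by simpa [Nat.lt_succ_iff] using hm), zero_mul, zero_div]

lemma natDegree_hypPoly_le (n : ℕ) (b d : ℝ) : (hypPoly n b d).natDegree ≤ n :=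
  natDegree_le_iff_coeff_eq_zero.2 fun m hm => by
    rw [coeff_hypPoly, poch_neg_natCast_of_lt (by exact_mod_cast hm), zero_mul, zero_div]

lemma hypPoly_ne_zero (n : ℕ) (b d : ℝ) : hypPoly n b d ≠ 0 := fun h => by
  simpa [coeff_hypPoly, poch] using congrArg (coeff · 0) h

lemma coeff_X_mul_derivative {R : Type*} [Semiring R] (p : R[X]) (m : ℕ) :
    (X * derivative p).coeff m = m * p.coeff m := by
  rcases m with _ | m
  · simp
  · simpa [coeff_derivative] using (Nat.cast_commute (m + 1) (p.coeff (m + 1))).symm.eq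

lemma hypPoly_contiguous (k : ℕ) (b d : ℝ) (hd : ∀ i : ℕ, d ≠ -i) :
    C d * ((1 - X) * hypPoly k (b + 1) (d + 1)) + C (d - b + k) * (X * hypPoly k (b + 1) (d + 1))
      + (X - X ^ 2) * derivative (hypPoly k (b + 1) (d + 1)) = C d * hypPoly (k + 1) b d := by
  set F := hypPoly k (b + 1) (d + 1)
  have hF : C d * ((1 - X) * F) + C (d - b + k) * (X * F) + (X - X ^ 2) * derivative F
      = C d * F + X * derivative F + X * (C (d - b + k) * F - C d * F - X * derivative F) := by
    ring
  have hd0 : d ≠ 0 := by simpa using hd 0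
  have hd1 (i : ℕ) : d + 1 ≠ -i := fun h => hd (i + 1) (by push_cast; linarith)
  rw [hF]
  ext m
  rcases m with _ | m
  · simp [F, coeff_hypPoly, poch]
  · simp only [coeff_add, coeff_C_mul, coeff_X_mul_derivative]
    simp only [coeff_X_mul, coeff_sub, coeff_C_mul, coeff_X_mul_derivative, F, coeff_hypPoly]
    rw [Nat.cast_succ k, poch_succ_left (-(k + 1 : ℝ)), poch_succ_left b, poch_succ_left d,
      poch_succ_right (-k), poch_succ_right (b + 1), poch_succ_right (d + 1), Nat.factorial_succ,
      show -(k + 1 : ℝ) + 1 = -k by ring]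
    have hpoch : poch (d + 1) m ≠ 0 := poch_ne_zero hd1
    have hdm : d + 1 + m ≠ 0 := fun h => hd1 m (by linarith)
    push_cast
    field_simp
    ring

noncomputable def hypWeighted (n : ℕ) (b d : ℝ) (z : ℝ) : ℝ :=
  z ^ (d - 1) * (z - 1) ^ (b - d - n) * (hypPoly n b d).eval z

lemma hypWeighted_eq_zero_iff {n : ℕ} {b d z : ℝ} (hz : 1 < z) :
    hypWeighted n b d z = 0 ↔ (hypPoly n b d).IsRoot z := by
  have h0 : 0 < z ^ (d - 1) := Real.rpow_pos_of_pos (by linarith) _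
  have h1 : 0 < (z - 1) ^ (b - d - n) := Real.rpow_pos_of_pos (by linarith) _
  simp [hypWeighted, h0.ne', h1.ne']

lemma hasDerivAt_hypWeighted (k : ℕ) (b d : ℝ) (hd : ∀ i : ℕ, d ≠ -i) {z : ℝ} (hz : 1 < z) :
    HasDerivAt (hypWeighted k (b + 1) (d + 1)) (-d * hypWeighted (k + 1) b d z) z := by
  have hz0 : 0 < z := by linarith
  have hz1 : 0 < z - 1 := by linarith
  set σ : ℝ := b - d - k
  have hpow : HasDerivAt (fun y : ℝ => y ^ d) (d * z ^ (d - 1)) z :=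
    Real.hasDerivAt_rpow_const (Or.inl hz0.ne')
  have hpow' : HasDerivAt (fun y : ℝ => (y - 1) ^ σ) (σ * (z - 1) ^ (σ - 1)) z := by
    simpa using ((hasDerivAt_id z).sub_const 1).rpow_const (p := σ) (Or.inl hz1.ne')
  have H := (hpow.mul hpow').mul ((hypPoly k (b + 1) (d + 1)).hasDerivAt z)
  have hcontig := congrArg (eval z) (hypPoly_contiguous k b d hd)
  simp only [eval_add, eval_mul, eval_sub, eval_C, eval_X, eval_pow, eval_one] at hcontig
  have e1 : z ^ d = z ^ (d - 1) * z := by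
    rw [← Real.rpow_add_one hz0.ne', sub_add_cancel]
  have e2 : (z - 1) ^ σ = (z - 1) ^ (σ - 1) * (z - 1) := by
    rw [← Real.rpow_add_one hz1.ne', sub_add_cancel]
  have hf : hypWeighted k (b + 1) (d + 1)
      = (fun y => y ^ d) * (fun y => (y - 1) ^ σ) * fun y => eval y (hypPoly k (b + 1) (d + 1)) := by
    ext y
    simp only [hypWeighted, add_sub_cancel_right, add_sub_add_right_eq_sub, Pi.mul_apply, σ]
  rw [hf]
  refine H.congr_deriv ?_
  simp only [hypWeighted, Pi.mul_apply]
  rw [Nat.cast_succ, show b - d - (k + 1 : ℝ) = σ - 1 by ring, e1, e2]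
  simp only [σ]
  linear_combination -(z ^ (d - 1) * (z - 1) ^ (σ - 1)) * hcontig

lemma tendsto_rpow_mul_sub_one_rpow_mul_eval_nhdsGT_one (p : ℝ[X]) (e : ℝ) {σ : ℝ} (hσ : 0 < σ) :
    Tendsto (fun z : ℝ => z ^ e * (z - 1) ^ σ * p.eval z) (𝓝[>] 1) (𝓝 0) := by
  have hcont : ContinuousAt (fun z : ℝ => z ^ e * (z - 1) ^ σ * p.eval z) 1 := by
    fun_prop (disch := first | exact Or.inl one_ne_zero | exact Or.inr hσ.le)
  simpa [Real.zero_rpow hσ.ne'] using hcont.tendsto.mono_left nhdsWithin_le_nhds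

lemma tendsto_rpow_mul_sub_one_rpow_mul_eval_atTop (p : ℝ[X]) {e σ : ℝ} (hσ : 0 ≤ σ)
    (h : e + σ + p.natDegree < 0) :
    Tendsto (fun z : ℝ => z ^ e * (z - 1) ^ σ * p.eval z) atTop (𝓝 0) := by
  have hsub : (fun z : ℝ => (z - 1) ^ σ) =O[atTop] fun z => z ^ σ := by
    refine Asymptotics.IsBigO.of_bound 1 ?_
    filter_upwards [eventually_ge_atTop 1] with z hz
    rw [Real.norm_of_nonneg (Real.rpow_nonneg (by linarith) _),
      Real.norm_of_nonneg (Real.rpow_nonneg (by linarith) _), one_mul]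
    exact Real.rpow_le_rpow (by linarith) (by linarith) hσ
  have hp : (fun z => p.eval z) =O[atTop] fun z : ℝ => z ^ (p.natDegree : ℝ) := by
    simpa using isBigO_atTop_of_degree_le p (X ^ p.natDegree) (by simp)
  refine (((Asymptotics.isBigO_refl (fun z : ℝ => z ^ e) atTop).mul hsub).mul hp).trans_tendsto ?_
  refine (tendsto_rpow_neg_atTop (neg_pos.2 h)).congr' ?_
  filter_upwards [eventually_gt_atTop 0] with z hz
  rw [neg_neg, Real.rpow_add hz, Real.rpow_add hz]

section Rolle

variable {f f' : ℝ → ℝ} {a : ℝ}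

lemma exists_hasDerivAt_eq_zero_Ioi (hfa : Tendsto f (𝓝[>] a) (𝓝 0))
    (hfb : Tendsto f atTop (𝓝 0)) (hff' : ∀ x ∈ Ioi a, HasDerivAt f (f' x) x) :
    ∃ c ∈ Ioi a, f' c = 0 := by
  -- Rolle on `(0, 1)` for `f ∘ φ`, where `φ t = a - 1 + t⁻¹` maps `(0, 1)` onto `(a, ∞)`.
  set φ : ℝ → ℝ := fun t => a - 1 + t⁻¹
  have hφ : MapsTo φ (Ioo 0 1) (Ioi a) := fun t ht => by
    have : 1 < t⁻¹ := one_lt_inv₀ ht.1 |>.2 ht.2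
    simp only [φ, mem_Ioi]; linarith
  have h0 : Tendsto φ (𝓝[>] 0) atTop := tendsto_atTop_add_const_left _ _ tendsto_inv_nhdsGT_zero
  have h1 : Tendsto φ (𝓝[<] 1) (𝓝[>] a) := by
    refine tendsto_nhdsWithin_iff.2 ⟨?_, ?_⟩
    · have : ContinuousAt φ 1 := by fun_prop (disch := norm_num)
      simpa [φ] using this.tendsto.mono_left nhdsWithin_le_nhds
    · filter_upwards [Ioo_mem_nhdsLT zero_lt_one] with t ht using hφ ht
  obtain ⟨c, hc, hc0⟩ := exists_hasDerivAt_eq_zero' zero_lt_one (hfb.comp h0) (hfa.comp h1)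
    fun t ht => (hff' (φ t) (hφ ht)).comp t ((hasDerivAt_inv ht.1.ne').const_add (a - 1))
  refine ⟨φ c, hφ hc, ?_⟩
  simpa [hc.1.ne'] using hc0

lemma exists_card_eq_deriv_zeros_Ioo {b : ℝ} (hab : a < b) (hfa : Tendsto f (𝓝[>] a) (𝓝 0))
    (hfb : Tendsto f (𝓝[<] b) (𝓝 0)) (hff' : ∀ x ∈ Ioo a b, HasDerivAt f (f' x) x)
    (S : Finset ℝ) (hS : ↑S ⊆ Ioo a b) (hS0 : ∀ x ∈ S, f x = 0) :
    ∃ T : Finset ℝ, T.card = S.card + 1 ∧ ↑T ⊆ Ioo a b ∧ ∀ x ∈ T, f' x = 0 := by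
  induction S using Finset.induction_on_max generalizing b with
  | empty =>
    obtain ⟨c, hc, hc0⟩ := exists_hasDerivAt_eq_zero' hab hfa hfb hff'
    exact ⟨{c}, rfl, by simpa using hc, by simpa using hc0⟩
  | insert x s hs ih =>
    have hx : x ∈ Ioo a b := hS (Finset.mem_insert_self x s)
    have hfx : ∀ t, Tendsto f (𝓝[t] x) (𝓝 0) := fun t => by
      rw [← hS0 x (Finset.mem_insert_self x s)]
      exact (hff' x hx).continuousAt.tendsto.mono_left nhdsWithin_le_nhds
    obtain ⟨T, hTcard, hT, hT0⟩ := ih hx.1 (hfx _) (fun y hy => hff' y ⟨hy.1, hy.2.trans hx.2⟩)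
      (fun y hy => ⟨(hS (Finset.mem_insert_of_mem hy)).1, hs y hy⟩)
      (fun y hy => hS0 y (Finset.mem_insert_of_mem hy))
    obtain ⟨c, hc, hc0⟩ := exists_hasDerivAt_eq_zero' hx.2 (hfx _) hfb
      (fun y hy => hff' y ⟨hx.1.trans hy.1, hy.2⟩)
    have hcT : c ∉ T := fun h => (hT h).2.not_gt hc.1
    refine ⟨insert c T, ?_, ?_, ?_⟩
    · rw [Finset.card_insert_of_notMem hcT, hTcard,
        Finset.card_insert_of_notMem fun h => (hs x h).false]
    · rw [Finset.coe_insert]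
      exact insert_subset ⟨hx.1.trans hc.1, hc.2⟩ (hT.trans (Ioo_subset_Ioo_right hx.2.le))
    · simpa [hc0] using hT0

lemma exists_card_eq_deriv_zeros_Ioi (hfa : Tendsto f (𝓝[>] a) (𝓝 0))
    (hfb : Tendsto f atTop (𝓝 0)) (hff' : ∀ x ∈ Ioi a, HasDerivAt f (f' x) x)
    (S : Finset ℝ) (hS : ↑S ⊆ Ioi a) (hS0 : ∀ x ∈ S, f x = 0) :
    ∃ T : Finset ℝ, T.card = S.card + 1 ∧ ↑T ⊆ Ioi a ∧ ∀ x ∈ T, f' x = 0 := by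
  induction S using Finset.induction_on_max with
  | empty =>
    obtain ⟨c, hc, hc0⟩ := exists_hasDerivAt_eq_zero_Ioi hfa hfb hff'
    exact ⟨{c}, rfl, by simpa using hc, by simpa using hc0⟩
  | insert x s hs _ =>
    have hx : a < x := hS (Finset.mem_insert_self x s)
    have hfx : ∀ t, Tendsto f (𝓝[t] x) (𝓝 0) := fun t => by
      rw [← hS0 x (Finset.mem_insert_self x s)]
      exact (hff' x hx).continuousAt.tendsto.mono_left nhdsWithin_le_nhds
    obtain ⟨T, hTcard, hT, hT0⟩ := exists_card_eq_deriv_zeros_Ioo hx hfa (hfx _)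
      (fun y hy => hff' y hy.1) s (fun y hy => ⟨hS (Finset.mem_insert_of_mem hy), hs y hy⟩)
      (fun y hy => hS0 y (Finset.mem_insert_of_mem hy))
    obtain ⟨c, hc, hc0⟩ := exists_hasDerivAt_eq_zero_Ioi (hfx _) hfb
      (fun y hy => hff' y (hx.trans hy))
    have hcT : c ∉ T := fun h => (hT h).2.not_gt hc
    refine ⟨insert c T, ?_, ?_, ?_⟩
    · rw [Finset.card_insert_of_notMem hcT, hTcard,
        Finset.card_insert_of_notMem fun h => (hs x h).false]
    · rw [Finset.coe_insert]
      exact insert_subset (hx.trans hc) (hT.trans Ioo_subset_Ioi_self)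
    · simpa [hc0] using hT0

end Rolle

lemma roots_map_eq_of_natDegree_le_card {K L : Type*} [CommRing K] [IsDomain K] [CommRing L]
    [IsDomain L] {f : K →+* L} (hf : Function.Injective f) {p : K[X]} {S : Finset K} (hp : p ≠ 0)
    (hS : ∀ x ∈ S, p.IsRoot x) (hdeg : p.natDegree ≤ S.card) :
    (p.map f).roots = S.val.map f := by
  have hroots : p.roots = S.val := roots_eq_of_natDegree_le_card_of_ne_zero hS hdeg hp
  have hcard : Multiset.card p.roots = p.natDegree :=
    le_antisymm (card_roots' p) (hroots ▸ hdeg)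
  rw [← hroots, roots_map_of_injective_of_card_eq_natDegree hf hcard]

lemma exists_roots_hypPoly_Ioi_one (n : ℕ) (b d : ℝ) (hb : b < 1 - n) (hd : d < b + 1 - n)
    (hdz : ∀ k : ℕ, d ≠ -k) :
    ∃ S : Finset ℝ, S.card = n ∧ ↑S ⊆ Ioi (1 : ℝ) ∧ ∀ x ∈ S, (hypPoly n b d).IsRoot x := by
  induction n generalizing b d with
  | zero => exact ⟨∅, rfl, by simp, by simp⟩
  | succ n ih =>
    push_cast at hb hd
    obtain ⟨S, hScard, hS, hS0⟩ := ih (b + 1) (d + 1) (by linarith) (by linarith)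
      fun i h => hdz (i + 1) (by push_cast; linarith)
    have hdeg : ((hypPoly n (b + 1) (d + 1)).natDegree : ℝ) ≤ n := by
      exact_mod_cast natDegree_hypPoly_le n (b + 1) (d + 1)
    obtain ⟨T, hTcard, hT, hT0⟩ := exists_card_eq_deriv_zeros_Ioi
      (tendsto_rpow_mul_sub_one_rpow_mul_eval_nhdsGT_one _ _ (by linarith))
      (tendsto_rpow_mul_sub_one_rpow_mul_eval_atTop _ (by linarith) (by linarith))
      (fun z hz => hasDerivAt_hypWeighted n b d hdz hz)
      S hS fun x hx => (hypWeighted_eq_zero_iff (hS hx)).2 (hS0 x hx)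
    have hd0 : d ≠ 0 := by simpa using hdz 0
    refine ⟨T, by rw [hTcard, hScard], hT, fun x hx => (hypWeighted_eq_zero_iff (hT hx)).1 ?_⟩
    simpa [hd0] using hT0 x hx

theorem hyp_zeros_in_Ioi_one_general (n : ℕ) (b d : ℝ)
    (hb : b < 1 - n) (hd : d < b + 1 - n) (hdz : ∀ k : ℕ, d ≠ -(k : ℝ)) :
    ∃ S : Finset ℝ, S.card = n ∧ (∀ x ∈ S, x ∈ Set.Ioi (1 : ℝ)) ∧
      ((hypPoly n b d).map (algebraMap ℝ ℂ)).roots = S.val.map (fun x => (x : ℂ)) := by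
  obtain ⟨S, hScard, hS, hS0⟩ := exists_roots_hypPoly_Ioi_one n b d hb hd hdz
  refine ⟨S, hScard, hS, ?_⟩
  rw [roots_map_eq_of_natDegree_le_card (algebraMap ℝ ℂ).injective (hypPoly_ne_zero n b d) hS0
    (hScard ▸ natDegree_hypPoly_le n b d)]
  -- `S.val.map (fun x => (x : ℂ))` elaborates through the monad structure of `Multiset`.
  simp only [Complex.coe_algebraMap, Multiset.pure_def, Multiset.bind_def, Multiset.bind_singleton,
    Multiset.map_map, Function.comp_apply]

/-- For `b < 1 - n` and `d < b + 1 - n` (with `d` not a nonpositive integer), the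
polynomial `₂F₁(-n, b; d; z)` has exactly `n` zeros, all real, simple, and lying in
`(1, ∞)`: viewed over `ℂ`, its multiset of roots is exactly the image of a set of `n`
distinct reals in `(1, ∞)`. -/
theorem hyp_zeros_in_Ioi_one (n : ℕ) (hn : 0 < n) (b d : ℝ)
    (hb : b < 1 - n) (hd : d < b + 1 - n) (hdz : ∀ k : ℕ, d ≠ -(k : ℝ)) :
    ∃ S : Finset ℝ, S.card = n ∧ (∀ x ∈ S, x ∈ Set.Ioi (1 : ℝ)) ∧
      ((hypPoly n b d).map (algebraMap ℝ ℂ)).roots = S.val.map (fun x => (x : ℂ)) :=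
  hyp_zeros_in_Ioi_one_general n b d hb hd hdz
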